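/- arXiv:1212.2701 — 2 statements merged into one kernel-verified Lean document; each statement's English description precedes it below -/
import Mathlib

section
/- For every unweighted, connected simple graph G on n ≥ 2 vertices and every integer k with 2 ≤ k ≤ n, the diameter of G satisfies λ_k · diam(G) ≤ 48 · k · log n, where λ_k is the k-th smallest eigenvalue of the normalized Laplacian of G and log denotes the natural logarithm. -/
open Finset Real

variable {V : Type*} [Fintype V] [DecidableEq V]

/-- The normalized Laplacian `I - D^{-1/2} A D^{-1/2}` of a simple graph. -/
noncomputable def normLap (G : SimpleGraph V) [DecidableRel G.Adj] : Matrix V V ℝ :=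
  1 - Matrix.diagonal (fun v => (Real.sqrt (G.degree v))⁻¹) * G.adjMatrix ℝ *
    Matrix.diagonal (fun v => (Real.sqrt (G.degree v))⁻¹)

lemma normLap_isHermitian (G : SimpleGraph V) [DecidableRel G.Adj] :
    (normLap G).IsHermitian := by
  unfold normLap
  apply Matrix.IsHermitian.sub (Matrix.isHermitian_one)
  rw [Matrix.IsHermitian, Matrix.conjTranspose_eq_transpose_of_trivial,
    Matrix.transpose_mul, Matrix.transpose_mul, Matrix.diagonal_transpose,
    G.transpose_adjMatrix, Matrix.mul_assoc]

/-- The `k`-th smallest eigenvalue (1-indexed) of the normalized Laplacian. -/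
noncomputable def normLapEigenvalue (G : SimpleGraph V) [DecidableRel G.Adj]
    (k : ℕ) (hk : k - 1 < Fintype.card V) : ℝ :=
  let f : Fin (Fintype.card V) → ℝ :=
    (normLap_isHermitian G).eigenvalues ∘ (Fintype.equivFin V).symm
  (f ∘ Tuple.sort f) ⟨k - 1, hk⟩

/-- Volume of a set of vertices: sum of degrees. -/
def vol (G : SimpleGraph V) [DecidableRel G.Adj] (S : Finset V) : ℕ :=
  ∑ v ∈ S, G.degree v

/-- Number of edges with exactly one endpoint in `S`. -/
def cut (G : SimpleGraph V) [DecidableRel G.Adj] (S : Finset V) : ℕ :=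
  ((S ×ˢ Sᶜ).filter fun p => G.Adj p.1 p.2).card

/-- Conductance of a set of vertices. -/
noncomputable def conductance (G : SimpleGraph V) [DecidableRel G.Adj] (S : Finset V) : ℝ :=
  (cut G S : ℝ) / min (vol G S) (vol G Sᶜ)

/-- Ball of radius `r` around a vertex in graph distance. -/
noncomputable def ball (G : SimpleGraph V) (v : V) (r : ℕ) : Finset V :=
  Finset.univ.filter fun u => G.dist v u ≤ r

/-- Set of vertices at distance at most `r` from a set `S`. -/
noncomputable def ballSet (G : SimpleGraph V) (S : Finset V) (r : ℕ) : Finset V :=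
  Finset.univ.filter fun u => ∃ w ∈ S, G.dist w u ≤ r

/-- Exterior neighborhood of `S`: vertices outside `S` adjacent to some vertex of `S`. -/
def nbhd (G : SimpleGraph V) [DecidableRel G.Adj] (S : Finset V) : Finset V :=
  Finset.univ.filter fun u => u ∉ S ∧ ∃ w ∈ S, G.Adj w u

/-!
By the min-max principle, `λ_k ≤ ρ` as soon as the Rayleigh quotient of `ℒ` is at most `ρ` on a
`k`-dimensional space. Writing a vector as `D^{1/2} g`, the quotient becomes
`∑_{uv ∈ E} (g u - g v)² / ∑_v d(v) g(v)²`, and for `g` a combination of indicators of pairwise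
disjoint sets `S_i` it is at most `2 max_i cut(S_i) / vol(S_i)`, because an edge meets at most
two of the `S_i`.

Put `R = ⌊diam / 2k⌋` and choose `k` vertices spaced `2R` apart on a diametral path. As long as
the cut of a ball around one of them exceeds `φ` times its volume, growing the radius by one
multiplies the volume by at least `1 + φ`; the volume stays below `n²`, so for
`φ = 3 log n / R` (when `φ ≤ 1`, so that `(1 + φ)^R ≥ 2^{φR} ≥ n²`) some radius `r < R` has
`cut ≤ φ · vol`. These `k` balls are disjoint, hence `λ_k ≤ 2φ = 6 log n / R ≤ 24 k log n / diam`.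
Small diameters and `φ > 1` are covered by `λ_k ≤ 2`.
-/

open Matrix

section DisjointSupport

variable {ι : Type*} [Fintype ι]

lemma sq_sum_le_mul_sum_sq_of_card_ne_zero_le {x : ι → ℝ} {m : ℕ} (hx : #{i | x i ≠ 0} ≤ m) :
    (∑ i, x i) ^ 2 ≤ m * ∑ i, x i ^ 2 := by
  rw [← Finset.sum_filter_ne_zero]
  calc (∑ i with x i ≠ 0, x i) ^ 2 ≤ #{i | x i ≠ 0} * ∑ i with x i ≠ 0, x i ^ 2 :=
        sq_sum_le_card_mul_sum_sq
    _ ≤ m * ∑ i, x i ^ 2 :=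
        mul_le_mul (by exact_mod_cast hx) (Finset.sum_le_sum_of_subset_of_nonneg
          (Finset.filter_subset _ _) fun i _ _ => sq_nonneg _)
          (Finset.sum_nonneg fun i _ => sq_nonneg _) (Nat.cast_nonneg _)

lemma sq_sum_eq_sum_sq_of_card_ne_zero_le_one {x : ι → ℝ} (hx : #{i | x i ≠ 0} ≤ 1) :
    (∑ i, x i) ^ 2 = ∑ i, x i ^ 2 := by
  rcases isEmpty_or_nonempty ι with hι | hι
  · simp
  obtain ⟨a, ha⟩ := Finset.card_le_one_iff_subset_singleton.1 hx
  have h0 : ∀ b ≠ a, x b = 0 := fun b hb => by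
    by_contra h
    exact hb (Finset.mem_singleton.1 (ha (by simpa using h)))
  rw [Finset.sum_eq_single a (fun b _ hb => h0 b hb) (by simp),
    Finset.sum_eq_single a (fun b _ hb => by simp [h0 b hb]) (by simp)]

lemma card_ne_zero_le_one_of_pairwise_disjoint {α : Type*} {f : ι → α → ℝ}
    (hf : Pairwise fun i j => Disjoint (Function.support (f i)) (Function.support (f j)))
    (a : α) : #{i | f i a ≠ 0} ≤ 1 :=
  Finset.card_le_one.2 fun i hi j hj => by
    by_contra hij
    exact Set.disjoint_left.1 (hf hij) (Finset.mem_filter.1 hi).2 (Finset.mem_filter.1 hj).2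

lemma sum_sq_sum_apply_mul_of_pairwise_disjoint {α : Type*} [Fintype α] {f : ι → α → ℝ}
    (hf : Pairwise fun i j => Disjoint (Function.support (f i)) (Function.support (f j)))
    (w : α → ℝ) :
    ∑ v, (∑ i, f i v) ^ 2 * w v = ∑ i, ∑ v, f i v ^ 2 * w v := by
  simp_rw [sq_sum_eq_sum_sq_of_card_ne_zero_le_one (card_ne_zero_le_one_of_pairwise_disjoint hf _),
    Finset.sum_mul]
  exact Finset.sum_comm

end DisjointSupport

namespace Matrix.IsHermitian

variable {n : Type*} [Fintype n] [DecidableEq n] {A : Matrix n n ℝ} (hA : A.IsHermitian)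

lemma dotProduct_eigenvectorBasis_mulVec (y : n → ℝ) (i : n) :
    ⇑(hA.eigenvectorBasis i) ⬝ᵥ A *ᵥ y = hA.eigenvalues i * (⇑(hA.eigenvectorBasis i) ⬝ᵥ y) := by
  rw [dotProduct_mulVec, ← mulVec_transpose, ← conjTranspose_eq_transpose_of_trivial, hA.eq,
    mulVec_eigenvectorBasis, smul_dotProduct, smul_eq_mul]

lemma sum_dotProduct_eigenvectorBasis_mul (x y : n → ℝ) :
    ∑ i, (⇑(hA.eigenvectorBasis i) ⬝ᵥ x) * (⇑(hA.eigenvectorBasis i) ⬝ᵥ y) = x ⬝ᵥ y := by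
  have := (hA.eigenvectorBasis).sum_inner_mul_inner (WithLp.toLp 2 x) (WithLp.toLp 2 y)
  simp only [EuclideanSpace.inner_eq_star_dotProduct, star_trivial] at this
  simpa [dotProduct_comm] using this

theorem finrank_le_card_eigenvalues_le {ρ : ℝ} (W : Submodule ℝ (n → ℝ))
    (hW : ∀ y ∈ W, y ⬝ᵥ A *ᵥ y ≤ ρ * (y ⬝ᵥ y)) :
    Module.finrank ℝ W ≤ Fintype.card {i // hA.eigenvalues i ≤ ρ} := by
  -- Otherwise some `y ≠ 0` in `W` is orthogonal to every eigenvector with eigenvalue `≤ ρ`,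
  -- and then its Rayleigh quotient exceeds `ρ`.
  by_contra! hlt
  let coeff : W →ₗ[ℝ] ({i // hA.eigenvalues i ≤ ρ} → ℝ) :=
    (Matrix.mulVecLin fun (i : {i // hA.eigenvalues i ≤ ρ}) => ⇑(hA.eigenvectorBasis i)).comp
      W.subtype
  obtain ⟨y, hy_ker, hy0⟩ := Submodule.exists_mem_ne_zero_of_ne_bot
    (LinearMap.ker_ne_bot_of_finrank_lt (f := coeff) (by simpa using hlt))
  set z : n → ℝ := fun i => ⇑(hA.eigenvectorBasis i) ⬝ᵥ (y : n → ℝ)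
  have hz_low : ∀ i, hA.eigenvalues i ≤ ρ → z i = 0 := fun i hi =>
    congrFun (LinearMap.mem_ker.1 hy_ker) ⟨i, hi⟩
  have hnorm : (y : n → ℝ) ⬝ᵥ y = ∑ i, z i ^ 2 := by
    rw [← hA.sum_dotProduct_eigenvectorBasis_mul]
    simp_rw [sq, z]
  have hquad : (y : n → ℝ) ⬝ᵥ A *ᵥ y = ∑ i, hA.eigenvalues i * z i ^ 2 := by
    rw [← hA.sum_dotProduct_eigenvectorBasis_mul]
    simp_rw [dotProduct_eigenvectorBasis_mulVec, z]
    exact Finset.sum_congr rfl fun i _ => by ring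
  obtain ⟨j, hj⟩ : ∃ j, z j ≠ 0 := by
    by_contra! h
    refine hy0 (Subtype.ext (dotProduct_self_eq_zero.1 ?_))
    simp [hnorm, h]
  have hterm : ∀ i, 0 ≤ (hA.eigenvalues i - ρ) * z i ^ 2 := fun i => by
    rcases le_or_gt (hA.eigenvalues i) ρ with hi | hi
    · simp [hz_low i hi]
    · exact mul_nonneg (by linarith) (sq_nonneg _)
  have hpos : 0 < ∑ i, (hA.eigenvalues i - ρ) * z i ^ 2 :=
    Finset.sum_pos' (fun i _ => hterm i) ⟨j, Finset.mem_univ _,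
      mul_pos (sub_pos.2 (not_le.1 (mt (hz_low j) hj))) (by positivity)⟩
  have := hW y y.2
  rw [hquad, hnorm] at this
  simp only [sub_mul, Finset.sum_sub_distrib, ← Finset.mul_sum] at hpos
  linarith

end Matrix.IsHermitian

namespace SimpleGraph

omit [DecidableEq V] in
lemma sum_sum_ite_adj (G : SimpleGraph V) [DecidableRel G.Adj] (f : V → ℝ) :
    ∑ i, ∑ j, (if G.Adj i j then f i else 0) = ∑ i, f i * G.degree i := by
  refine Finset.sum_congr rfl fun i _ => ?_
  rw [G.degree_eq_sum_if_adj, Finset.mul_sum]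
  exact Finset.sum_congr rfl fun j _ => by split_ifs <;> simp

lemma dotProduct_lapMatrix_mulVec_le (G : SimpleGraph V) [DecidableRel G.Adj] (g : V → ℝ) :
    g ⬝ᵥ G.lapMatrix ℝ *ᵥ g ≤ 2 * ∑ v, g v ^ 2 * G.degree v := by
  rw [← toLinearMap₂'_apply', lapMatrix_toLinearMap₂' ℝ G]
  have hterm : ∀ i j, (if G.Adj i j then (g i - g j) ^ 2 else 0) ≤
      2 * ((if G.Adj i j then g i ^ 2 else 0) + (if G.Adj j i then g j ^ 2 else 0)) := by
    intro i j
    by_cases h : G.Adj i j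
    · simp only [h, h.symm, if_true]
      nlinarith [sq_nonneg (g i + g j)]
    · simp only [h, if_false]
      split_ifs <;> positivity
  calc (∑ i, ∑ j, if G.Adj i j then (g i - g j) ^ 2 else 0) / 2
      ≤ (∑ i, ∑ j, 2 * ((if G.Adj i j then g i ^ 2 else 0) +
          (if G.Adj j i then g j ^ 2 else 0))) / 2 := by
        gcongr with i _ j _
        exact hterm i j
    _ = 2 * ∑ v, g v ^ 2 * G.degree v := by
        simp only [← Finset.mul_sum, Finset.sum_add_distrib]
        rw [Finset.sum_comm (f := fun i j => if G.Adj j i then g j ^ 2 else 0), sum_sum_ite_adj]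
        ring

lemma dotProduct_lapMatrix_mulVec_sum_le (G : SimpleGraph V) [DecidableRel G.Adj]
    {ι : Type*} [Fintype ι] {f : ι → V → ℝ}
    (hf : Pairwise fun i j => Disjoint (Function.support (f i)) (Function.support (f j))) :
    (∑ i, f i) ⬝ᵥ G.lapMatrix ℝ *ᵥ (∑ i, f i) ≤ 2 * ∑ i, f i ⬝ᵥ G.lapMatrix ℝ *ᵥ f i := by
  classical
  simp only [← toLinearMap₂'_apply', lapMatrix_toLinearMap₂' ℝ G, Finset.sum_apply]
  have hterm : ∀ v u, (if G.Adj v u then (∑ i, f i v - ∑ i, f i u) ^ 2 else 0) ≤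
      2 * ∑ i, if G.Adj v u then (f i v - f i u) ^ 2 else 0 := by
    intro v u
    by_cases h : G.Adj v u
    · simp only [h, if_true, ← Finset.sum_sub_distrib]
      refine sq_sum_le_mul_sum_sq_of_card_ne_zero_le ?_
      calc #{i | f i v - f i u ≠ 0}
          ≤ #(({i | f i v ≠ 0} : Finset ι) ∪ ({i | f i u ≠ 0} : Finset ι)) := by
            refine Finset.card_le_card fun i hi => ?_
            simp only [Finset.mem_union, Finset.mem_filter, Finset.mem_univ, true_and] at hi ⊢
            by_contra! h'
            exact hi (by rw [h'.1, h'.2, sub_zero])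
        _ ≤ 1 + 1 := (Finset.card_union_le _ _).trans (add_le_add
            (card_ne_zero_le_one_of_pairwise_disjoint hf v)
            (card_ne_zero_le_one_of_pairwise_disjoint hf u))
    · simp [h]
  calc (∑ v, ∑ u, if G.Adj v u then (∑ i, f i v - ∑ i, f i u) ^ 2 else 0) / 2
      ≤ (∑ v, ∑ u, 2 * ∑ i, if G.Adj v u then (f i v - f i u) ^ 2 else 0) / 2 := by
        gcongr with v _ u _
        exact hterm v u
    _ = 2 * (∑ i, ∑ v, ∑ u, if G.Adj v u then (f i v - f i u) ^ 2 else 0) / 2 := by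
        simp_rw [← Finset.mul_sum]
        rw [(Finset.sum_congr rfl fun v _ => Finset.sum_comm).trans Finset.sum_comm]
    _ = 2 * ∑ i, (∑ v, ∑ u, if G.Adj v u then (f i v - f i u) ^ 2 else 0) / 2 := by
        rw [mul_div_assoc, Finset.sum_div]

lemma Walk.sub_le_dist_getVert {α : Type*} {G : SimpleGraph α} {u v : α} (p : G.Walk u v)
    (hp : p.length = G.dist u v) {i j : ℕ} (hj : j ≤ p.length) :
    j - i ≤ G.dist (p.getVert i) (p.getVert j) := by
  have hi : G.dist u (p.getVert i) ≤ i := (dist_le (p.take i)).trans (by simp [Walk.take_length])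
  have hj' : G.dist (p.getVert j) v ≤ p.length - j :=
    (dist_le (p.drop j)).trans_eq (p.drop_length j)
  have h₁ := (p.take i).reachable.dist_triangle_left v
  have h₂ := ((p.take i).reachable.symm.trans (p.take j).reachable).dist_triangle_left v
  omega

lemma Connected.exists_pairwise_le_dist {α : Type*} {G : SimpleGraph α} (hG : G.Connected)
    (m k : ℕ) (h : m * (k - 1) ≤ G.diam) :
    ∃ p : Fin k → α, Pairwise fun i j => m ≤ G.dist (p i) (p j) := by
  have := hG.nonempty
  obtain ⟨u, v, huv⟩ := exists_dist_eq_diam (G := G)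
  obtain ⟨w, hw⟩ := hG.exists_walk_length_eq_dist u v
  have hlt : ∀ i j : Fin k, i < j → m ≤ G.dist (w.getVert (m * i)) (w.getVert (m * j)) := by
    intro i j hij
    refine le_trans ?_ (w.sub_le_dist_getVert hw ?_)
    · rw [← Nat.mul_sub]
      exact Nat.le_mul_of_pos_right m (Nat.sub_pos_of_lt hij)
    · rw [hw, huv]
      exact (Nat.mul_le_mul_left m (Nat.le_sub_one_of_lt j.2)).trans h
  refine ⟨fun i => w.getVert (m * i), fun i j hij => ?_⟩
  rcases lt_or_gt_of_ne hij with h | h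
  · exact hlt i j h
  · rw [dist_comm]
    exact hlt j i h

end SimpleGraph

section NormalizedLaplacian

variable (G : SimpleGraph V) [DecidableRel G.Adj]

lemma normLapEigenvalue_le_of_lt_card {k : ℕ} (hk : k - 1 < Fintype.card V) {ρ : ℝ}
    (h : k - 1 < Fintype.card {v // (normLap_isHermitian G).eigenvalues v ≤ ρ}) :
    normLapEigenvalue G k hk ≤ ρ := by
  set f := (normLap_isHermitian G).eigenvalues ∘ (Fintype.equivFin V).symm
  refine (Tuple.lt_card_le_iff_apply_le_of_monotone (Tuple.monotone_sort f)).1 ?_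
  rw [← Fintype.card_subtype]
  exact h.trans_eq (Fintype.card_congr (Equiv.subtypeEquiv
    ((Fintype.equivFin V).trans (Tuple.sort f).symm) fun v => by simp [f]))

theorem normLapEigenvalue_le_of_le_finrank {k : ℕ} (hk : k - 1 < Fintype.card V) (hk0 : 0 < k)
    {ρ : ℝ} (W : Submodule ℝ (V → ℝ)) (hkW : k ≤ Module.finrank ℝ W)
    (hW : ∀ y ∈ W, y ⬝ᵥ normLap G *ᵥ y ≤ ρ * (y ⬝ᵥ y)) :
    normLapEigenvalue G k hk ≤ ρ :=
  normLapEigenvalue_le_of_lt_card G hk <| (Nat.sub_lt hk0 one_pos).trans_le <|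
    hkW.trans ((normLap_isHermitian G).finrank_le_card_eigenvalues_le W hW)

lemma normLap_eq_of_degree_pos (hd : ∀ v, 0 < G.degree v) :
    normLap G = diagonal (fun v => (√(G.degree v))⁻¹) * G.lapMatrix ℝ *
      diagonal (fun v => (√(G.degree v))⁻¹) := by
  have hdiag : diagonal (fun v => (√(G.degree v))⁻¹) * G.degMatrix ℝ *
      diagonal (fun v => (√(G.degree v))⁻¹) = 1 := by
    rw [SimpleGraph.degMatrix, diagonal_mul_diagonal, diagonal_mul_diagonal, ← diagonal_one]
    congr 1
    ext v
    have : √(G.degree v : ℝ) ≠ 0 := Real.sqrt_ne_zero'.2 (by exact_mod_cast hd v)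
    field_simp
    exact (Real.sq_sqrt (Nat.cast_nonneg _)).symm
  rw [normLap, SimpleGraph.lapMatrix, Matrix.mul_sub, Matrix.sub_mul, hdiag]

lemma dotProduct_normLap_mulVec (hd : ∀ v, 0 < G.degree v) (g : V → ℝ) :
    (fun v => g v * √(G.degree v)) ⬝ᵥ normLap G *ᵥ (fun v => g v * √(G.degree v)) =
      g ⬝ᵥ G.lapMatrix ℝ *ᵥ g := by
  have hs : ∀ v, √(G.degree v : ℝ) ≠ 0 := fun v => Real.sqrt_ne_zero'.2 (by exact_mod_cast hd v)
  have hvec : (fun v => g v * √(G.degree v)) ᵥ* diagonal (fun v => (√(G.degree v))⁻¹) = g := by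
    ext v; rw [vecMul_diagonal]; field_simp [hs v]
  have hmul : diagonal (fun v => (√(G.degree v))⁻¹) *ᵥ (fun v => g v * √(G.degree v)) = g := by
    ext v; rw [mulVec_diagonal]; field_simp [hs v]
  rw [normLap_eq_of_degree_pos G hd, ← mulVec_mulVec, ← mulVec_mulVec, dotProduct_mulVec,
    hvec, hmul]

omit [DecidableEq V] in
lemma dotProduct_mul_sqrt_degree (g : V → ℝ) :
    (fun v => g v * √(G.degree v)) ⬝ᵥ (fun v => g v * √(G.degree v)) =
      ∑ v, g v ^ 2 * G.degree v :=
  Finset.sum_congr rfl fun v _ => by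
    rw [mul_mul_mul_comm, Real.mul_self_sqrt (Nat.cast_nonneg _), sq]

theorem normLapEigenvalue_le_two (hd : ∀ v, 0 < G.degree v) {k : ℕ}
    (hk : k - 1 < Fintype.card V) (hk0 : 0 < k) : normLapEigenvalue G k hk ≤ 2 := by
  refine normLapEigenvalue_le_of_le_finrank G hk hk0 ⊤ (by simp; omega) fun y _ => ?_
  have hy : y = fun v => y v / √(G.degree v) * √(G.degree v) := by
    ext v
    rw [div_mul_cancel₀ _ (Real.sqrt_ne_zero'.2 (by exact_mod_cast hd v))]
  rw [hy, dotProduct_normLap_mulVec G hd, dotProduct_mul_sqrt_degree]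
  exact G.dotProduct_lapMatrix_mulVec_le _

lemma cut_eq_sum_sum (S : Finset V) :
    (cut G S : ℝ) = ∑ i, ∑ j, if i ∈ S ∧ j ∉ S ∧ G.Adj i j then 1 else 0 := by
  rw [cut, Finset.card_filter, Finset.sum_product]
  push_cast
  simp only [ite_and, Finset.sum_ite_irrel, Finset.sum_const_zero, ← Finset.mem_compl]
  rw [Finset.sum_ite_mem, Finset.univ_inter]
  refine Finset.sum_congr rfl fun i _ => ?_
  rw [Finset.sum_ite_mem, Finset.univ_inter]

lemma dotProduct_lapMatrix_mulVec_indicator (S : Finset V) :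
    (S : Set V).indicator 1 ⬝ᵥ G.lapMatrix ℝ *ᵥ (S : Set V).indicator 1 = cut G S := by
  rw [← toLinearMap₂'_apply', SimpleGraph.lapMatrix_toLinearMap₂' ℝ G, cut_eq_sum_sum]
  have hterm : ∀ i j, (if G.Adj i j then
      ((S : Set V).indicator (1 : V → ℝ) i - (S : Set V).indicator 1 j) ^ 2 else 0) =
      (if i ∈ S ∧ j ∉ S ∧ G.Adj i j then 1 else 0) +
        (if j ∈ S ∧ i ∉ S ∧ G.Adj j i then 1 else 0) := by
    intro i j
    by_cases h : G.Adj i j <;> by_cases hi : i ∈ S <;> by_cases hj : j ∈ S <;>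
      simp [h, hi, hj, G.adj_comm]
  simp only [hterm, Finset.sum_add_distrib]
  rw [Finset.sum_comm (f := fun i j => if j ∈ S ∧ i ∉ S ∧ G.Adj j i then (1:ℝ) else 0)]
  ring

lemma dotProduct_lapMatrix_mulVec_le_of_pairwise_disjoint {ι : Type*} [Fintype ι]
    (S : ι → Finset V) (hdisj : Pairwise fun i j => Disjoint (S i) (S j)) {φ : ℝ}
    (hcut : ∀ i, (cut G (S i) : ℝ) ≤ φ * vol G (S i)) (c : ι → ℝ) :
    (∑ i, c i • (S i : Set V).indicator 1) ⬝ᵥ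
        G.lapMatrix ℝ *ᵥ (∑ i, c i • (S i : Set V).indicator 1) ≤
      2 * φ * ∑ v, (∑ i, c i • (S i : Set V).indicator (1 : V → ℝ)) v ^ 2 * G.degree v := by
  have hsupp : Pairwise fun i j =>
      Disjoint (Function.support (c i • (S i : Set V).indicator (1 : V → ℝ)))
      (Function.support (c j • (S j : Set V).indicator (1 : V → ℝ))) := fun i j hij =>
    (Finset.disjoint_coe.2 (hdisj hij)).mono
      ((Function.support_const_smul_subset _ _).trans (Set.support_indicator_subset))
      ((Function.support_const_smul_subset _ _).trans (Set.support_indicator_subset))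
  have hnorm : ∑ v, (∑ i, c i • (S i : Set V).indicator (1 : V → ℝ)) v ^ 2 * G.degree v =
      ∑ i, c i ^ 2 * vol G (S i) := by
    simp only [Finset.sum_apply]
    rw [sum_sq_sum_apply_mul_of_pairwise_disjoint hsupp]
    refine Finset.sum_congr rfl fun i _ => ?_
    simp only [Pi.smul_apply, Set.indicator_apply, Finset.mem_coe, Pi.one_apply, smul_eq_mul,
      mul_ite, mul_one, mul_zero, ite_pow, ite_mul, zero_pow two_ne_zero, zero_mul]
    rw [Finset.sum_ite_mem, Finset.univ_inter, vol, Nat.cast_sum, Finset.mul_sum]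
  have hquad : ∀ i, (c i • (S i : Set V).indicator 1) ⬝ᵥ
      G.lapMatrix ℝ *ᵥ (c i • (S i : Set V).indicator 1) = c i ^ 2 * cut G (S i) := by
    intro i
    rw [mulVec_smul, smul_dotProduct, dotProduct_smul, dotProduct_lapMatrix_mulVec_indicator,
      smul_eq_mul, smul_eq_mul, sq, mul_assoc]
  calc _ ≤ 2 * ∑ i, (c i • (S i : Set V).indicator 1) ⬝ᵥ
          G.lapMatrix ℝ *ᵥ (c i • (S i : Set V).indicator 1) :=
        G.dotProduct_lapMatrix_mulVec_sum_le hsupp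
    _ = 2 * ∑ i, c i ^ 2 * cut G (S i) := by simp_rw [hquad]
    _ ≤ 2 * ∑ i, c i ^ 2 * (φ * vol G (S i)) := by
        gcongr with i
        exact hcut i
    _ = _ := by
        rw [hnorm, mul_assoc, Finset.mul_sum (a := φ)]
        exact congrArg _ (Finset.sum_congr rfl fun i _ => by ring)

theorem normLapEigenvalue_le_of_pairwise_disjoint (hd : ∀ v, 0 < G.degree v) {k : ℕ}
    (hk : k - 1 < Fintype.card V) (hk0 : 0 < k) (S : Fin k → Finset V)
    (hS : ∀ i, (S i).Nonempty) (hdisj : Pairwise fun i j => Disjoint (S i) (S j))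
    {φ : ℝ} (hcut : ∀ i, (cut G (S i) : ℝ) ≤ φ * vol G (S i)) :
    normLapEigenvalue G k hk ≤ 2 * φ := by
  set x : Fin k → V → ℝ := fun i v => (S i : Set V).indicator 1 v * √(G.degree v)
  have hx : ∀ c : Fin k → ℝ, ∑ i, c i • x i =
      fun v => (∑ i, c i • (S i : Set V).indicator 1) v * √(G.degree v) := by
    intro c
    ext v
    simp only [Finset.sum_apply, Pi.smul_apply, smul_eq_mul, Finset.sum_mul, x, mul_assoc]
  have hlin : LinearIndependent ℝ x := by
    refine Fintype.linearIndependent_iff.2 fun c hc i => ?_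
    obtain ⟨v, hv⟩ := hS i
    have hcv := congrFun ((hx c).symm.trans hc) v
    rw [Finset.sum_apply, Finset.sum_eq_single i (fun j _ hji => by
      simp [Finset.disjoint_left.1 (hdisj hji.symm) hv]) (by simp)] at hcv
    simpa [hv, Real.sqrt_ne_zero'.2 (show (0 : ℝ) < G.degree v by exact_mod_cast hd v)] using hcv
  refine normLapEigenvalue_le_of_le_finrank G hk hk0 (Submodule.span ℝ (Set.range x))
    (by rw [finrank_span_eq_card hlin, Fintype.card_fin]) fun y hy => ?_
  obtain ⟨c, rfl⟩ := (Submodule.mem_span_range_iff_exists_fun ℝ).1 hy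
  rw [hx, dotProduct_normLap_mulVec G hd, dotProduct_mul_sqrt_degree]
  exact dotProduct_lapMatrix_mulVec_le_of_pairwise_disjoint G S hdisj hcut c

end NormalizedLaplacian

section Balls

variable (G : SimpleGraph V)

omit [DecidableEq V] in
@[simp]
lemma mem_ball {p v : V} {r : ℕ} : v ∈ ball G p r ↔ G.dist p v ≤ r := by
  simp [ball]

omit [DecidableEq V] in
lemma disjoint_ball_of_add_lt_dist (hG : G.Connected) {p q : V} {r s : ℕ}
    (h : r + s < G.dist p q) : Disjoint (ball G p r) (ball G q s) :=
  Finset.disjoint_left.2 fun v hp hq => by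
    rw [mem_ball] at hp hq
    have := hG.dist_triangle (u := p) (v := v) (w := q)
    rw [SimpleGraph.dist_comm (u := v)] at this
    omega

variable [DecidableRel G.Adj]

lemma cut_le_vol_nbhd (S : Finset V) : cut G S ≤ vol G (nbhd G S) := by
  rw [vol]
  simp only [SimpleGraph.degree, ← Finset.card_sigma]
  refine Finset.card_le_card_of_injOn (fun e => ⟨e.2, e.1⟩) (fun e he => ?_) fun e _ e' _ h => ?_
  · simp only [Finset.coe_filter, Set.mem_ofPred_eq, Finset.mem_product, Finset.mem_compl] at he
    simp only [Finset.coe_sigma, Set.mem_sigma_iff, Finset.mem_coe, nbhd, Finset.mem_filter,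
      Finset.mem_univ, true_and, SimpleGraph.mem_neighborFinset]
    exact ⟨⟨he.1.2, e.1, he.1.1, he.2⟩, he.2.symm⟩
  · simp only [Sigma.mk.injEq, heq_eq_eq] at h
    exact Prod.ext h.2 h.1

lemma nbhd_ball_subset (hG : G.Connected) (p : V) (r : ℕ) :
    nbhd G (ball G p r) ⊆ ball G p (r + 1) \ ball G p r := by
  intro v hv
  simp only [nbhd, Finset.mem_filter, Finset.mem_univ, true_and, mem_ball] at hv
  obtain ⟨hv, w, hw, hwv⟩ := hv
  simp only [Finset.mem_sdiff, mem_ball]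
  refine ⟨?_, hv⟩
  have := hG.dist_triangle (u := p) (v := w) (w := v)
  rw [SimpleGraph.dist_eq_one_iff_adj.2 hwv] at this
  omega

lemma vol_add_cut_ball_le (hG : G.Connected) (p : V) (r : ℕ) :
    vol G (ball G p r) + cut G (ball G p r) ≤ vol G (ball G p (r + 1)) := by
  have hsub : ball G p r ⊆ ball G p (r + 1) := fun v hv => by
    rw [mem_ball] at hv ⊢
    omega
  calc vol G (ball G p r) + cut G (ball G p r)
      ≤ vol G (ball G p r) + vol G (ball G p (r + 1) \ ball G p r) := by
        gcongr
        exact (cut_le_vol_nbhd G _).trans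
          (Finset.sum_le_sum_of_subset (nbhd_ball_subset G hG p r))
    _ = vol G (ball G p (r + 1)) := by
        rw [vol, vol, vol, add_comm, Finset.sum_sdiff hsub]

lemma one_add_pow_le_vol_ball (hG : G.Connected) {p : V} (hp : 0 < G.degree p) {φ : ℝ}
    (hφ : 0 ≤ φ) {R : ℕ} (h : ∀ r < R, φ * vol G (ball G p r) ≤ cut G (ball G p r)) :
    (1 + φ) ^ R ≤ vol G (ball G p R) := by
  induction R with
  | zero =>
    have : G.degree p ≤ vol G (ball G p 0) := by
      unfold vol
      exact Finset.single_le_sum (f := fun v => G.degree v) (fun _ _ => Nat.zero_le _)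
        (show p ∈ ball G p 0 by simp)
    simpa using (show (1 : ℝ) ≤ vol G (ball G p 0) by exact_mod_cast hp.trans_le this)
  | succ R ih =>
    calc (1 + φ) ^ (R + 1) = (1 + φ) ^ R * (1 + φ) := pow_succ _ _
      _ ≤ vol G (ball G p R) * (1 + φ) := by
          gcongr
          exact ih fun r hr => h r (by omega)
      _ = vol G (ball G p R) + φ * vol G (ball G p R) := by ring
      _ ≤ vol G (ball G p R) + cut G (ball G p R) := by gcongr; exact h R (by omega)
      _ ≤ vol G (ball G p (R + 1)) := by exact_mod_cast vol_add_cut_ball_le G hG p R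

omit [DecidableEq V] in
lemma vol_lt_card_sq [Nonempty V] (S : Finset V) : vol G S < Fintype.card V ^ 2 :=
  calc vol G S ≤ vol G Finset.univ := Finset.sum_le_sum_of_subset (Finset.subset_univ S)
    _ < ∑ _v : V, Fintype.card V :=
        Finset.sum_lt_sum_of_nonempty Finset.univ_nonempty fun v _ => G.degree_lt_card_verts v
    _ = Fintype.card V ^ 2 := by simp [sq]

lemma exists_cut_ball_le (hG : G.Connected) {p : V} (hp : 0 < G.degree p) {φ : ℝ} (hφ : 0 ≤ φ)
    {R : ℕ} (hR : (Fintype.card V : ℝ) ^ 2 ≤ (1 + φ) ^ R) :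
    ∃ r < R, (cut G (ball G p r) : ℝ) ≤ φ * vol G (ball G p r) := by
  by_contra! h
  have hgrowth := one_add_pow_le_vol_ball G hG hp hφ fun r hr => (h r hr).le
  have : Nonempty V := ⟨p⟩
  have hvol : (vol G (ball G p R) : ℝ) < Fintype.card V ^ 2 := by
    exact_mod_cast vol_lt_card_sq G _
  linarith

theorem normLapEigenvalue_le_of_le_diam (hG : G.Connected) (hd : ∀ v, 0 < G.degree v) {k : ℕ}
    (hk : k - 1 < Fintype.card V) (hk0 : 0 < k) {R : ℕ} (hkR : 2 * R * (k - 1) ≤ G.diam)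
    {φ : ℝ} (hφ : 0 ≤ φ) (hR : (Fintype.card V : ℝ) ^ 2 ≤ (1 + φ) ^ R) :
    normLapEigenvalue G k hk ≤ 2 * φ := by
  obtain ⟨p, hp⟩ := hG.exists_pairwise_le_dist (2 * R) k hkR
  choose r hrR hcut using fun i => exists_cut_ball_le G hG (hd (p i)) hφ hR
  refine normLapEigenvalue_le_of_pairwise_disjoint G hd hk hk0 (fun i => ball G (p i) (r i))
    (fun i => ⟨p i, by simp⟩) (fun i j hij => disjoint_ball_of_add_lt_dist G hG ?_) hcut
  have := hp hij
  have := hrR i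
  have := hrR j
  omega

end Balls

lemma sq_le_one_add_pow {x φ : ℝ} (hx : 1 ≤ x) (hφ₀ : 0 ≤ φ) (hφ₁ : φ ≤ 1) {R : ℕ}
    (h : 3 * Real.log x ≤ R * φ) : x ^ 2 ≤ (1 + φ) ^ R := by
  have hbernoulli : (2 : ℝ) ^ φ ≤ 1 + φ := by
    simpa [one_add_one_eq_two] using
      rpow_one_add_le_one_add_mul_self (s := 1) (by norm_num) hφ₀ hφ₁
  have hlog2 := Real.log_two_gt_d9
  have hlogx := Real.log_nonneg hx
  calc x ^ 2 = Real.exp (2 * Real.log x) := by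
        rw [mul_comm, Real.exp_mul, Real.exp_log (by linarith), Real.rpow_two]
    _ ≤ Real.exp (R * (Real.log 2 * φ)) := Real.exp_le_exp.2 (by nlinarith)
    _ = ((2 : ℝ) ^ φ) ^ R := by rw [Real.exp_nat_mul, Real.rpow_def_of_pos two_pos]
    _ ≤ (1 + φ) ^ R := pow_le_pow_left₀ (by positivity) hbernoulli R

theorem normLapEigenvalue_le_log_div (G : SimpleGraph V) [DecidableRel G.Adj]
    (hG : G.Connected) (hd : ∀ v, 0 < G.degree v) {k : ℕ} (hk : k - 1 < Fintype.card V)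
    (hk0 : 0 < k) {R : ℕ} (hR : 0 < R) (hkR : 2 * R * (k - 1) ≤ G.diam) :
    normLapEigenvalue G k hk ≤ 6 * Real.log (Fintype.card V) / R := by
  have hn : (1 : ℝ) ≤ Fintype.card V := by exact_mod_cast Fintype.card_pos_iff.2 hG.nonempty
  have hR₀ : (0 : ℝ) < R := by exact_mod_cast hR
  set φ := 3 * Real.log (Fintype.card V) / R
  rw [show 6 * Real.log (Fintype.card V) / R = 2 * φ by ring]
  rcases le_or_gt φ 1 with hφ₁ | hφ₁
  · have hφ₀ : 0 ≤ φ := div_nonneg (by linarith [Real.log_nonneg hn]) hR₀.le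
    exact normLapEigenvalue_le_of_le_diam G hG hd hk hk0 hkR hφ₀
      (sq_le_one_add_pow hn hφ₀ hφ₁ (by rw [mul_div_cancel₀ _ hR₀.ne']))
  · linarith [normLapEigenvalue_le_two G hd hk hk0]

theorem normLapEigenvalue_mul_diam_le (G : SimpleGraph V) [DecidableRel G.Adj]
    (hG : G.Connected) (hd : ∀ v, 0 < G.degree v) {k : ℕ} (hk : k - 1 < Fintype.card V)
    (hk0 : 0 < k) (hD : 4 * k ≤ G.diam) :
    normLapEigenvalue G k hk * G.diam ≤ 24 * k * Real.log (Fintype.card V) := by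
  set R := G.diam / (2 * k)
  have hR₁ : 1 ≤ R := (Nat.le_div_iff_mul_le (by omega)).2 (by omega)
  have h2kR : 2 * R * (k - 1) ≤ G.diam :=
    (Nat.mul_le_mul_left _ (Nat.sub_le k 1)).trans
      (by rw [mul_right_comm]; exact Nat.mul_div_le _ _)
  have hDR : (G.diam : ℝ) ≤ 4 * k * R := by
    have h₁ : G.diam < 2 * k * (R + 1) := Nat.lt_mul_div_succ _ (by omega)
    have h₂ : 2 * k ≤ 2 * k * R := Nat.le_mul_of_pos_right _ hR₁
    exact_mod_cast (show G.diam ≤ 4 * k * R by rw [mul_add, mul_one] at h₁; linarith)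
  have hR₀ : (0 : ℝ) < R := by exact_mod_cast hR₁
  calc normLapEigenvalue G k hk * G.diam
      ≤ 6 * Real.log (Fintype.card V) / R * (4 * k * R) :=
        mul_le_mul (normLapEigenvalue_le_log_div G hG hd hk hk0 hR₁ h2kR) hDR
          (Nat.cast_nonneg _) (by positivity)
    _ = 24 * k * Real.log (Fintype.card V) := by field_simp; ring

/-- **Main theorem (Oveis Gharan–Trevisan).** For any unweighted, connected simple graph `G`
on `n ≥ 2` vertices and any `2 ≤ k ≤ n`, one has `λ_k ⬝ diam(G) ≤ 48 k log n`. -/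
theorem diam_bound_of_laplacian_eigenvalue (G : SimpleGraph V) [DecidableRel G.Adj]
    (hG : G.Connected) (hn : 2 ≤ Fintype.card V)
    (k : ℕ) (hk2 : 2 ≤ k) (hkn : k ≤ Fintype.card V) :
    normLapEigenvalue G k (by omega) * G.diam ≤
      48 * k * Real.log (Fintype.card V) := by
  have : Nontrivial V := Fintype.one_lt_card_iff_nontrivial.1 hn
  have hd : ∀ v, 0 < G.degree v := fun v => hG.preconnected.degree_pos_of_nontrivial v
  have hlog : (2 : ℝ) / 3 ≤ Real.log (Fintype.card V) :=
    le_trans (by linarith [Real.log_two_gt_d9] : (2 : ℝ) / 3 ≤ Real.log 2)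
      (Real.log_le_log two_pos (by exact_mod_cast hn))
  have hk : (2 : ℝ) ≤ k := by exact_mod_cast hk2
  rcases lt_or_ge G.diam (4 * k) with hD | hD
  · have hD' : (G.diam : ℝ) ≤ 4 * k := by exact_mod_cast hD.le
    calc normLapEigenvalue G k _ * G.diam ≤ 2 * (4 * k) :=
          mul_le_mul (normLapEigenvalue_le_two G hd _ (by omega)) hD' (Nat.cast_nonneg _)
            zero_le_two
      _ ≤ 48 * k * Real.log (Fintype.card V) := by nlinarith
  · exact (normLapEigenvalue_mul_diam_le G hG hd _ (by omega) hD).trans (by nlinarith)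
end

section
/- Let G be an unweighted, connected simple graph on n ≥ 2 vertices and let k ≥ 2 be an integer. Suppose v_1, …, v_k are vertices such that the balls B(v_i, ⌊diam(G)/(6k)⌋) are pairwise disjoint and each satisfies vol(B(v_i, ⌊diam(G)/(6k)⌋)) ≤ vol(V)/2, and suppose ⌊diam(G)/(6k)⌋ ≥ 1. Then for each i there exists an integer radius r_i with 0 ≤ r_i < diam(G)/(6k) such that φ(B(v_i, r_i)) ≤ 24 · k · log n / diam(G), and the sets B(v_1, r_1), …, B(v_k, r_k) are pairwise disjoint. -/
open Finset Real

variable {V : Type*} [Fintype V] [DecidableEq V]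

section Aux

variable (G : SimpleGraph V) [DecidableRel G.Adj]

lemma mem_ball_self (v : V) (r : ℕ) : v ∈ ball G v r := by
  simp [ball, SimpleGraph.dist_self]

lemma ball_mono (v : V) {r s : ℕ} (h : r ≤ s) : ball G v r ⊆ ball G v s := by
  intro u hu
  simp only [ball, mem_filter, mem_univ, true_and] at hu ⊢
  omega

lemma vol_mono {S T : Finset V} (h : S ⊆ T) : vol G S ≤ vol G T :=
  Finset.sum_le_sum_of_subset h

lemma vol_add_vol_compl (S : Finset V) : vol G S + vol G Sᶜ = vol G univ :=
  Finset.sum_add_sum_compl S _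

lemma cut_eq_sum (S : Finset V) :
    cut G S = ∑ u ∈ S, (Sᶜ.filter (fun w => G.Adj u w)).card := by
  unfold cut
  rw [Finset.card_filter, Finset.sum_product]
  simp only [Finset.card_filter]

lemma cut_eq_sum' (S : Finset V) :
    cut G S = ∑ w ∈ Sᶜ, (S.filter (fun u => G.Adj u w)).card := by
  unfold cut
  rw [Finset.card_filter, Finset.sum_product_right]
  simp only [Finset.card_filter]

lemma cut_le_vol (S : Finset V) : cut G S ≤ vol G S := by
  rw [cut_eq_sum]
  refine Finset.sum_le_sum fun u _ => ?_
  rw [← SimpleGraph.card_neighborFinset_eq_degree, SimpleGraph.neighborFinset_eq_filter]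
  exact Finset.card_le_card (fun w hw => by
    simp only [mem_filter] at hw ⊢; exact ⟨mem_univ _, hw.2⟩)

lemma cut_le_vol_compl (S : Finset V) : cut G S ≤ vol G Sᶜ := by
  rw [cut_eq_sum']
  refine Finset.sum_le_sum fun w _ => ?_
  rw [← SimpleGraph.card_neighborFinset_eq_degree, SimpleGraph.neighborFinset_eq_filter]
  exact Finset.card_le_card (fun u hu => by
    simp only [mem_filter] at hu ⊢; exact ⟨mem_univ _, (hu.2).symm⟩)

lemma degree_pos (hG : G.Connected) (hn : 2 ≤ Fintype.card V) (v : V) :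
    0 < G.degree v := by
  obtain ⟨w, hw⟩ := Fintype.exists_ne_of_one_lt_card (by omega) v
  obtain ⟨p⟩ := hG.preconnected v w
  rw [SimpleGraph.degree_pos_iff_exists_adj]
  obtain ⟨u, h, -⟩ := (SimpleGraph.Walk.not_nil_iff).mp
    (SimpleGraph.Walk.not_nil_of_ne (fun h => hw h.symm) (p := p))
  exact ⟨u, h⟩

lemma grow (hG : G.Connected) (v : V) (r : ℕ) :
    vol G (ball G v r) + cut G (ball G v r) ≤ vol G (ball G v (r + 1)) := by
  have hsub : ball G v r ⊆ ball G v (r + 1) := ball_mono G v (Nat.le_succ r)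
  have hcut : cut G (ball G v r) ≤ ∑ w ∈ ball G v (r + 1) \ ball G v r, G.degree w := by
    rw [cut_eq_sum']
    have hzero : ∑ w ∈ (ball G v r)ᶜ, ((ball G v r).filter (fun u => G.Adj u w)).card
        = ∑ w ∈ ball G v (r + 1) \ ball G v r,
            ((ball G v r).filter (fun u => G.Adj u w)).card := by
      refine (Finset.sum_subset ?_ ?_).symm
      · intro w hw
        rw [Finset.mem_sdiff] at hw
        simpa using hw.2
      · intro w hw hnw
        rw [Finset.card_eq_zero, Finset.filter_eq_empty_iff]
        intro u hu hadj
        apply hnw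
        rw [Finset.mem_sdiff]
        refine ⟨?_, by simpa using hw⟩
        simp only [ball, mem_filter, mem_univ, true_and] at hu ⊢
        have h1 : G.dist u w ≤ 1 :=
          le_trans (SimpleGraph.dist_le (SimpleGraph.Walk.cons hadj SimpleGraph.Walk.nil))
            (by norm_num)
        calc G.dist v w ≤ G.dist v u + G.dist u w := hG.dist_triangle
          _ ≤ r + 1 := by omega
      done
    rw [hzero]
    refine Finset.sum_le_sum fun w _ => ?_
    rw [← SimpleGraph.card_neighborFinset_eq_degree, SimpleGraph.neighborFinset_eq_filter]
    exact Finset.card_le_card (fun u hu => by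
      simp only [mem_filter] at hu ⊢; exact ⟨mem_univ _, (hu.2).symm⟩)
  have hsum : (∑ w ∈ ball G v (r + 1) \ ball G v r, G.degree w)
      + ∑ w ∈ ball G v r, G.degree w = ∑ w ∈ ball G v (r + 1), G.degree w :=
    Finset.sum_sdiff hsub
  unfold vol
  omega

end Aux

lemma half_le_log_one_add {c : ℝ} (h0 : 0 ≤ c) (h1 : c ≤ 1) :
    c / 2 ≤ Real.log (1 + c) := by
  rw [Real.le_log_iff_exp_le (by linarith)]
  have hexp : Real.exp (1 / 2) ≤ 2 := by
    have h : Real.exp (1 / 2) * Real.exp (1 / 2) = Real.exp 1 := by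
      rw [← Real.exp_add]; norm_num
    nlinarith [Real.exp_pos (1 / 2), Real.exp_one_lt_d9]
  have hconv := convexOn_exp.2 (Set.mem_univ (0 : ℝ)) (Set.mem_univ (1 / 2 : ℝ))
    (by linarith : (0:ℝ) ≤ 1 - c) h0 (by ring)
  simp only [smul_eq_mul, mul_zero, zero_add, Real.exp_zero] at hconv
  have : Real.exp (c / 2) ≤ (1 - c) * 1 + c * Real.exp (1 / 2) := by
    have he : c * (1 / 2) = c / 2 := by ring
    rw [he] at hconv
    linarith
  nlinarith

lemma key (G : SimpleGraph V) [DecidableRel G.Adj] (hG : G.Connected)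
    (hn : 2 ≤ Fintype.card V) (k : ℕ) (hk : 2 ≤ k) (v : V)
    (hR : 1 ≤ G.diam / (6 * k))
    (hvol : (vol G (ball G v (G.diam / (6 * k))) : ℝ) ≤ (vol G Finset.univ : ℝ) / 2) :
    ∃ r : ℕ, r < G.diam / (6 * k) ∧
      conductance G (ball G v r) ≤ 24 * k * Real.log (Fintype.card V) / G.diam := by
  set R := G.diam / (6 * k) with hRdef
  set c : ℝ := 24 * k * Real.log (Fintype.card V) / G.diam with hcdef
  have hk6 : 0 < 6 * k := by omega
  have h6kd : 6 * k ≤ G.diam := (Nat.one_le_div_iff hk6).mp hR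
  have hd0 : 0 < G.diam := by omega
  have hdR : (0:ℝ) < (G.diam : ℝ) := by exact_mod_cast hd0
  have hn2 : (2:ℝ) ≤ (Fintype.card V : ℝ) := by exact_mod_cast hn
  have hlogn : 0 < Real.log (Fintype.card V) := Real.log_pos (by linarith)
  have hkR : (2:ℝ) ≤ (k:ℝ) := by exact_mod_cast hk
  have hc0 : 0 < c := by
    rw [hcdef]
    apply div_pos _ hdR
    nlinarith
  have hdeg : ∀ u, 0 < G.degree u := degree_pos G hG hn
  have hvolr : ∀ r, (1:ℝ) ≤ (vol G (ball G v r) : ℝ) := by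
    intro r
    have h1 : G.degree v ≤ vol G (ball G v r) :=
      Finset.single_le_sum (f := fun u => G.degree u) (fun i _ => Nat.zero_le _)
        (mem_ball_self G v r)
    have h2 := hdeg v
    exact_mod_cast by omega
  have : Nonempty V := Fintype.card_pos_iff.mp (by omega)
  have hvoluniv_lt : (vol G univ : ℝ) < (Fintype.card V : ℝ) ^ 2 := by
    have h1 : vol G univ < Fintype.card V * Fintype.card V := by
      have := Finset.sum_lt_sum_of_nonempty (s := (univ : Finset V))
        (f := fun u => G.degree u) (g := fun _ => Fintype.card V)
        Finset.univ_nonempty (fun i _ => G.degree_lt_card_verts i)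
      simpa [vol, Finset.sum_const, Finset.card_univ, mul_comm] using this
    have : (vol G univ : ℝ) < (Fintype.card V : ℝ) * Fintype.card V := by exact_mod_cast h1
    nlinarith
  have hvolball : ∀ r ≤ R, (vol G (ball G v r) : ℝ) ≤ (vol G univ : ℝ) / 2 := by
    intro r hr
    refine le_trans ?_ hvol
    exact_mod_cast vol_mono G (ball_mono G v hr)
  have hcompl : ∀ r ≤ R, vol G (ball G v r) ≤ vol G (ball G v r)ᶜ := by
    intro r hr
    have h1 := vol_add_vol_compl G (ball G v r)
    have h2 : (vol G (ball G v r) : ℝ) + ((vol G (ball G v r)ᶜ : ℕ) : ℝ) = (vol G univ : ℝ) := by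
      exact_mod_cast congrArg (Nat.cast : ℕ → ℝ) h1
    have h3 := hvolball r hr
    have : (vol G (ball G v r) : ℝ) ≤ ((vol G (ball G v r)ᶜ : ℕ) : ℝ) := by linarith
    exact_mod_cast this
  by_cases hc1 : c < 1
  · -- main case: ball growing
    by_contra hcon
    push_neg at hcon
    have hstep : ∀ r < R, (1 + c) * (vol G (ball G v r) : ℝ) ≤ (vol G (ball G v (r+1)) : ℝ) := by
      intro r hr
      have hmin : conductance G (ball G v r)
          = (cut G (ball G v r) : ℝ) / (vol G (ball G v r) : ℝ) := by
        unfold conductance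
        rw [min_eq_left (hcompl r hr.le)]

      have hcc := hcon r hr
      rw [hmin] at hcc
      have hpos : (0:ℝ) < (vol G (ball G v r) : ℝ) := lt_of_lt_of_le one_pos (hvolr r)
      rw [lt_div_iff₀ hpos] at hcc
      have hg : (vol G (ball G v r) : ℝ) + (cut G (ball G v r) : ℝ)
          ≤ (vol G (ball G v (r+1)) : ℝ) := by exact_mod_cast grow G hG v r
      nlinarith
    have hpow : ∀ r ≤ R, (1 + c) ^ r ≤ (vol G (ball G v r) : ℝ) := by
      intro r
      induction r with
      | zero => intro _; simpa using hvolr 0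
      | succ m ih =>
        intro hm
        have h1 := ih (by omega)
        have h2 := hstep m (by omega)
        calc (1 + c) ^ (m + 1) = (1 + c) * (1 + c) ^ m := by ring
          _ ≤ (1 + c) * (vol G (ball G v m) : ℝ) :=
              mul_le_mul_of_nonneg_left h1 (by linarith)
          _ ≤ _ := h2
    have hfin : (1 + c) ^ R < (Fintype.card V : ℝ) ^ 2 / 2 :=
      lt_of_le_of_lt (le_trans (hpow R le_rfl) (hvolball R le_rfl)) (by linarith)
    have hlogup : (R:ℝ) * Real.log (1 + c) < 2 * Real.log (Fintype.card V) - Real.log 2 := by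
      have hl := Real.log_lt_log (pow_pos (by linarith) R) hfin
      rw [Real.log_pow, Real.log_div (by positivity) (by norm_num), Real.log_pow] at hl
      push_cast at hl ⊢
      linarith
    have h6K : (0:ℝ) < 6 * (k:ℝ) := by linarith
    have hRlow : (G.diam : ℝ) / (6 * (k:ℝ)) - 1 ≤ (R:ℝ) := by
      have hmod : G.diam % (6 * k) < 6 * k := Nat.mod_lt _ hk6
      have hdm : 6 * k * R + G.diam % (6 * k) = G.diam := Nat.div_add_mod G.diam (6 * k)
      have hnat : G.diam ≤ 6 * k * (R + 1) := by
        have : 6 * k * (R + 1) = 6 * k * R + 6 * k := by ring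
        omega
      have hcast : (G.diam : ℝ) ≤ 6 * (k:ℝ) * ((R:ℝ) + 1) := by exact_mod_cast hnat
      rw [sub_le_iff_le_add, div_le_iff₀ h6K]
      linarith
    have hRlow0 : (0:ℝ) ≤ (G.diam : ℝ) / (6 * (k:ℝ)) - 1 := by
      have hcast : 6 * (k:ℝ) ≤ (G.diam : ℝ) := by exact_mod_cast h6kd
      rw [sub_nonneg, le_div_iff₀ h6K]
      linarith
    have hlb : ((G.diam : ℝ) / (6 * (k:ℝ)) - 1) * (c / 2) ≤ (R:ℝ) * Real.log (1 + c) :=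
      mul_le_mul hRlow (half_le_log_one_add hc0.le hc1.le) (by linarith) (Nat.cast_nonneg R)
    have hcompute : ((G.diam : ℝ) / (6 * (k:ℝ)) - 1) * (c / 2)
        = 2 * Real.log (Fintype.card V) - c / 2 := by
      rw [hcdef]
      have hkne : (k:ℝ) ≠ 0 := by linarith
      have hdne : (G.diam : ℝ) ≠ 0 := ne_of_gt hdR
      field_simp
      ring
    have hlog2 : (0.6931471803:ℝ) < Real.log 2 := Real.log_two_gt_d9
    linarith
  · -- trivial case: c ≥ 1, take r = 0
    push_neg at hc1
    refine ⟨0, by omega, ?_⟩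
    have hS1 : 1 ≤ vol G (ball G v 0) := by exact_mod_cast hvolr 0
    have hSc : 1 ≤ vol G (ball G v 0)ᶜ := le_trans hS1 (hcompl 0 (by omega))
    have hminpos : (0:ℝ) < ((min (vol G (ball G v 0)) (vol G (ball G v 0)ᶜ) : ℕ) : ℝ) := by
      have h1 : 1 ≤ min (vol G (ball G v 0)) (vol G (ball G v 0)ᶜ) := le_min hS1 hSc
      exact_mod_cast Nat.lt_of_lt_of_le Nat.zero_lt_one h1
    have : conductance G (ball G v 0) ≤ 1 := by
      unfold conductance
      rw [div_le_one hminpos]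
      exact_mod_cast le_min (cut_le_vol G (ball G v 0)) (cut_le_vol_compl G (ball G v 0))
    linarith

/-- Given `k` vertices whose balls of radius `⌊diam(G)/(6k)⌋` are pairwise disjoint and each
of volume at most half the total volume, one can shrink each ball to one of conductance at
most `24 k log n / diam(G)`, keeping the balls pairwise disjoint. -/
theorem exists_disjoint_small_conductance_balls (G : SimpleGraph V) [DecidableRel G.Adj]
    (hG : G.Connected) (hn : 2 ≤ Fintype.card V) (k : ℕ) (hk : 2 ≤ k)
    (v : Fin k → V) (hR : 1 ≤ G.diam / (6 * k))
    (hdisj : Pairwise (Function.onFun Disjoint fun i => ball G (v i) (G.diam / (6 * k))))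
    (hvol : ∀ i, (vol G (ball G (v i) (G.diam / (6 * k))) : ℝ) ≤
      (vol G Finset.univ : ℝ) / 2) :
    ∃ r : Fin k → ℕ,
      (∀ i, (r i : ℝ) < (G.diam : ℝ) / (6 * k)) ∧
      (∀ i, conductance G (ball G (v i) (r i)) ≤
        24 * k * Real.log (Fintype.card V) / G.diam) ∧
      Pairwise (Function.onFun Disjoint fun i => ball G (v i) (r i)) := by
  choose r hrlt hcond using fun i => key G hG hn k hk (v i) hR (hvol i)
  refine ⟨r, fun i => ?_, hcond, fun i j hij => ?_⟩
  · have h1 : ((r i : ℕ) : ℝ) < ((G.diam / (6 * k) : ℕ) : ℝ) := by exact_mod_cast hrlt i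
    have h2 : ((G.diam / (6 * k) : ℕ) : ℝ) ≤ (G.diam : ℝ) / ((6 * k : ℕ) : ℝ) :=
      Nat.cast_div_le
    have h3 : ((6 * k : ℕ) : ℝ) = 6 * (k : ℝ) := by push_cast; ring
    rw [h3] at h2
    linarith
  · exact (hdisj hij).mono (ball_mono G (v i) (hrlt i).le) (ball_mono G (v j) (hrlt j).le)
end
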